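/- Let n ≥ 3, 1 ≤ z ≤ ⌊(n-1)/2⌋, and consider the sorted profile x in which z agents are at 0, ⌈(n-2z)/2⌉ agents are at 1/2, and ⌊n/2⌋ agents are at 1. Then the utilitarian social cost with z outliers of placing the facility at 1/2 divided by the optimal utilitarian social cost with z outliers equals ⌊n/2⌋ / ⌈(n-2z)/2⌉, which equals n/(n-2z) for n even and (n-1)/(n-2z+1) for n odd. -/

import Mathlib

/-! With `z` outliers at `0`, `m` agents at `1/2` and `k ≥ max z m` agents at `1`, any choice of
`n - z` agents keeps counts `a ≤ z`, `b ≤ m`, `c ≤ k` with `a + b + c = m + k`, so any two of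
`a, b, c` sum to at least `m`. The cost `a|y| + b|y - 1/2| + c|y - 1|` is then at least `m/2`
everywhere, attained at `y = 1` by discarding the outliers; at `y = 1/2` the agents at `0` and `1`
that are kept number at least `k`, so the cost there is `k/2`, again attained by discarding the
outliers. -/

/-- Utilitarian social cost with `z` outliers of placing the facility at `y`:
minimum over sets `S` of `n - z` non-outliers of the total distance. -/
noncomputable def OPTsc (n z : ℕ) (x : Fin n → ℝ) (y : ℝ) : ℝ :=
  sInf {c : ℝ | ∃ S : Finset (Fin n), S.card = n - z ∧ c = ∑ i ∈ S, |y - x i|}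

/-- Optimal utilitarian social cost with `z` outliers. -/
noncomputable def OPTscStar (n z : ℕ) (x : Fin n → ℝ) : ℝ :=
  sInf (Set.range (OPTsc n z x))

open Finset

theorem Fin.card_filter_le_val_lt {n l u : ℕ} (hu : u ≤ n) :
    #{i : Fin n | l ≤ i.val ∧ i.val < u} = u - l := by
  rw [← card_map Fin.valEmbedding, map_filter', map_valEmbedding_univ, ← Nat.card_Ico]
  congr 1
  ext j
  simp only [mem_filter, mem_Iio, Fin.exists_iff, valEmbedding_apply, mem_Ico]
  grind

theorem half_le_abs_add_abs_sub_half_add_abs_sub_one {a b c m : ℝ} (y : ℝ)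
    (ha : 0 ≤ a) (hb : 0 ≤ b) (hc : 0 ≤ c)
    (hbc : m ≤ b + c) (hac : m ≤ a + c) (hab : m ≤ a + b) :
    m / 2 ≤ a * |y| + b * |y - 1/2| + c * |y - 1| := by
  -- The right side is piecewise linear with values `(b + 2c)/2`, `(a + c)/2`, `(2a + b)/2` at the
  -- breakpoints `0, 1/2, 1`: between them it is a convex combination of these, outside it grows.
  rcases le_total y 0 with h | h
  · rw [abs_of_nonpos h, abs_of_nonpos (by linarith), abs_of_nonpos (by linarith)]
    nlinarith [mul_nonneg ha (neg_nonneg.2 h), mul_nonneg hb (neg_nonneg.2 h),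
      mul_nonneg hc (neg_nonneg.2 h)]
  rcases le_total y (1/2) with h' | h'
  · rw [abs_of_nonneg h, abs_of_nonpos (by linarith), abs_of_nonpos (by linarith)]
    nlinarith [mul_nonneg (by linarith : (0:ℝ) ≤ 1 - 2 * y) (by linarith : (0:ℝ) ≤ b + c - m),
      mul_nonneg h (by linarith : (0:ℝ) ≤ a + c - m)]
  rcases le_total y 1 with h'' | h''
  · rw [abs_of_nonneg h, abs_of_nonneg (by linarith), abs_of_nonpos (by linarith)]
    nlinarith [mul_nonneg (by linarith : (0:ℝ) ≤ 2 * y - 1) (by linarith : (0:ℝ) ≤ a + b - m),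
      mul_nonneg (by linarith : (0:ℝ) ≤ 1 - y) (by linarith : (0:ℝ) ≤ a + c - m)]
  · rw [abs_of_nonneg h, abs_of_nonneg (by linarith), abs_of_nonneg (by linarith)]
    nlinarith [mul_nonneg ha (by linarith : (0:ℝ) ≤ y - 1),
      mul_nonneg hb (by linarith : (0:ℝ) ≤ y - 1), mul_nonneg hc (by linarith : (0:ℝ) ≤ y - 1)]

section ThreeValues

variable {ι : Type*} {x : ι → ℝ}

theorem sum_comp_eq_of_mem_three {M : Type*} [AddCommMonoid M] {S : Finset ι}
    (hx : ∀ i ∈ S, x i = 0 ∨ x i = 1/2 ∨ x i = 1) (f : ℝ → M) :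
    ∑ i ∈ S, f (x i) =
      #{i ∈ S | x i = 0} • f 0 + #{i ∈ S | x i = 1/2} • f (1/2) + #{i ∈ S | x i = 1} • f 1 := by
  rw [← sum_fiberwise_of_maps_to' (t := {0, 1/2, 1}) (by simpa using hx),
    sum_insert (by norm_num), sum_insert (by norm_num), sum_singleton, add_assoc]
  simp only [sum_const]

theorem card_eq_of_mem_three (hx : ∀ i, x i = 0 ∨ x i = 1/2 ∨ x i = 1) (S : Finset ι) :
    #S = #{i ∈ S | x i = 0} + #{i ∈ S | x i = 1/2} + #{i ∈ S | x i = 1} := by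
  rw [card_eq_sum_ones, sum_comp_eq_of_mem_three (fun i _ => hx i) (fun _ => 1)]
  simp only [smul_eq_mul, mul_one]

theorem sum_abs_sub_eq_of_mem_three (hx : ∀ i, x i = 0 ∨ x i = 1/2 ∨ x i = 1)
    (S : Finset ι) (y : ℝ) :
    ∑ i ∈ S, |y - x i| = #{i ∈ S | x i = 0} * |y| + #{i ∈ S | x i = 1/2} * |y - 1/2|
      + #{i ∈ S | x i = 1} * |y - 1| := by
  simpa only [nsmul_eq_mul, sub_zero] using
    sum_comp_eq_of_mem_three (fun i _ => hx i) (fun v => |y - v|)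

theorem sum_abs_sub_filter_ne_zero [Fintype ι] {m k : ℕ}
    (hx : ∀ i, x i = 0 ∨ x i = 1/2 ∨ x i = 1)
    (hh : #{i | x i = 1/2} = m) (h1 : #{i | x i = 1} = k) (y : ℝ) :
    ∑ i ∈ {i | x i ≠ 0}, |y - x i| = m * |y - 1/2| + k * |y - 1| := by
  rw [sum_filter,
    sum_comp_eq_of_mem_three (fun i _ => hx i) (fun v => if v ≠ 0 then |y - v| else 0), hh, h1]
  norm_num

end ThreeValues

section OPTsc

variable {n z : ℕ} {x : Fin n → ℝ}

theorem OPTsc_nonneg (y : ℝ) : 0 ≤ OPTsc n z x y :=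
  Real.sInf_nonneg (by rintro _ ⟨S, -, rfl⟩; positivity)

theorem OPTsc_le_sum {S : Finset (Fin n)} (hS : #S = n - z) (y : ℝ) :
    OPTsc n z x y ≤ ∑ i ∈ S, |y - x i| :=
  csInf_le ⟨0, by rintro _ ⟨T, -, rfl⟩; positivity⟩ ⟨S, hS, rfl⟩

theorem le_OPTsc {c y : ℝ} (h : ∀ S : Finset (Fin n), #S = n - z → c ≤ ∑ i ∈ S, |y - x i|) :
    c ≤ OPTsc n z x y := by
  obtain ⟨S, -, hS⟩ := exists_subset_card_eq (s := (univ : Finset (Fin n))) (n := n - z) (by simp)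
  exact le_csInf ⟨_, S, hS, rfl⟩ (by rintro _ ⟨T, hT, rfl⟩; exact h T hT)

theorem OPTscStar_le (y : ℝ) : OPTscStar n z x ≤ OPTsc n z x y :=
  csInf_le ⟨0, by rintro _ ⟨y, rfl⟩; exact OPTsc_nonneg y⟩ (Set.mem_range_self y)

theorem le_OPTscStar {c : ℝ} (h : ∀ y, c ≤ OPTsc n z x y) : c ≤ OPTscStar n z x :=
  le_csInf (Set.range_nonempty _) (by rintro _ ⟨y, rfl⟩; exact h y)

end OPTsc

section ThreeBlocks

variable {n z m k : ℕ} {x : Fin n → ℝ}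

theorem card_filter_ne_zero (h0 : #{i | x i = 0} = z) : #{i | x i ≠ 0} = n - z := by
  have := card_filter_add_card_filter_not (s := univ) (fun i => x i = 0)
  change #{i | x i = 0} + #{i | x i ≠ 0} = #univ at this
  rw [card_univ, Fintype.card_fin, h0] at this
  omega

theorem half_le_sum_abs_sub (hx : ∀ i, x i = 0 ∨ x i = 1/2 ∨ x i = 1)
    (h0 : #{i | x i = 0} = z) (hh : #{i | x i = 1/2} = m) (h1 : #{i | x i = 1} = k)
    (hzk : z ≤ k) (hmk : m ≤ k) {S : Finset (Fin n)} (hS : #S = n - z) (y : ℝ) :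
    (m : ℝ) / 2 ≤ ∑ i ∈ S, |y - x i| := by
  have hn := card_eq_of_mem_three hx univ
  have hS3 := card_eq_of_mem_three hx S
  have ha := h0 ▸ card_le_card (filter_subset_filter (fun i => x i = 0) (subset_univ S))
  have hb := hh ▸ card_le_card (filter_subset_filter (fun i => x i = 1/2) (subset_univ S))
  have hc := h1 ▸ card_le_card (filter_subset_filter (fun i => x i = 1) (subset_univ S))
  rw [card_univ, Fintype.card_fin, h0, hh, h1] at hn
  rw [sum_abs_sub_eq_of_mem_three hx]
  apply half_le_abs_add_abs_sub_half_add_abs_sub_one y (by positivity) (by positivity)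
    (by positivity) <;> norm_cast <;> omega

theorem half_le_sum_abs_half_sub (hx : ∀ i, x i = 0 ∨ x i = 1/2 ∨ x i = 1)
    (h0 : #{i | x i = 0} = z) (hh : #{i | x i = 1/2} = m) (h1 : #{i | x i = 1} = k)
    {S : Finset (Fin n)} (hS : #S = n - z) :
    (k : ℝ) / 2 ≤ ∑ i ∈ S, |1/2 - x i| := by
  have hn := card_eq_of_mem_three hx univ
  have hS3 := card_eq_of_mem_three hx S
  have hb := hh ▸ card_le_card (filter_subset_filter (fun i => x i = 1/2) (subset_univ S))
  rw [card_univ, Fintype.card_fin, h0, hh, h1] at hn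
  have hac : (k : ℝ) ≤ #{i ∈ S | x i = 0} + #{i ∈ S | x i = 1} := by norm_cast; omega
  rw [sum_abs_sub_eq_of_mem_three hx, abs_of_pos (by norm_num : (0:ℝ) < 1/2), sub_self, abs_zero,
    show |(1:ℝ)/2 - 1| = 1/2 by norm_num [abs_of_neg]]
  linarith

theorem OPTsc_half_eq (hx : ∀ i, x i = 0 ∨ x i = 1/2 ∨ x i = 1)
    (h0 : #{i | x i = 0} = z) (hh : #{i | x i = 1/2} = m) (h1 : #{i | x i = 1} = k) :
    OPTsc n z x (1/2) = k / 2 := by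
  refine le_antisymm ?_ (le_OPTsc fun S hS => half_le_sum_abs_half_sub hx h0 hh h1 hS)
  refine (OPTsc_le_sum (card_filter_ne_zero h0) _).trans_eq ?_
  rw [sum_abs_sub_filter_ne_zero hx hh h1, sub_self, abs_zero,
    show |(1:ℝ)/2 - 1| = 1/2 by norm_num [abs_of_neg]]
  ring

theorem OPTscStar_eq (hx : ∀ i, x i = 0 ∨ x i = 1/2 ∨ x i = 1)
    (h0 : #{i | x i = 0} = z) (hh : #{i | x i = 1/2} = m) (h1 : #{i | x i = 1} = k)
    (hzk : z ≤ k) (hmk : m ≤ k) :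
    OPTscStar n z x = m / 2 := by
  refine le_antisymm ?_ (le_OPTscStar fun y =>
    le_OPTsc fun S hS => half_le_sum_abs_sub hx h0 hh h1 hzk hmk hS y)
  refine (OPTscStar_le 1).trans ((OPTsc_le_sum (card_filter_ne_zero h0) _).trans_eq ?_)
  rw [sum_abs_sub_filter_ne_zero hx hh h1, sub_self, abs_zero,
    show |(1:ℝ) - 1/2| = 1/2 by norm_num [abs_of_pos]]
  ring

end ThreeBlocks

theorem floor_half_div_ceil_half_of_even {n z : ℕ} (hn : Even n) (hz : 2 * z < n) :
    ((n / 2 : ℕ) : ℝ) / (((n - 2 * z + 1) / 2 : ℕ) : ℝ) = (n : ℝ) / ((n : ℝ) - 2 * z) := by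
  obtain ⟨r, rfl⟩ := hn
  have hzr : (z : ℝ) < r := by exact_mod_cast (by omega : z < r)
  rw [show (r + r) / 2 = r by omega, show (r + r - 2 * z + 1) / 2 = r - z by omega,
    Nat.cast_sub (by omega), div_eq_div_iff (by linarith) (by push_cast; linarith)]
  push_cast
  ring

theorem floor_half_div_ceil_half_of_odd {n z : ℕ} (hn : Odd n) (hz : 2 * z < n) :
    ((n / 2 : ℕ) : ℝ) / (((n - 2 * z + 1) / 2 : ℕ) : ℝ) =
      ((n : ℝ) - 1) / ((n : ℝ) - 2 * z + 1) := by
  obtain ⟨r, rfl⟩ := hn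
  have hzr : (z : ℝ) ≤ r := by exact_mod_cast (by omega : z ≤ r)
  rw [show (2 * r + 1) / 2 = r by omega, show (2 * r + 1 - 2 * z + 1) / 2 = r + 1 - z by omega,
    Nat.cast_sub (by omega), div_eq_div_iff (by push_cast; linarith) (by push_cast; linarith)]
  push_cast
  ring

theorem stmt_13_general (n z : ℕ) (hz1 : 1 ≤ z) (hz2 : z ≤ (n - 1) / 2)
    (x : Fin n → ℝ)
    (hx : ∀ i : Fin n, x i =
      if i.val < z then 0 else if i.val < z + (n - 2 * z + 1) / 2 then 1/2 else 1) :
    OPTsc n z x (1/2) / OPTscStar n z x = ((n / 2 : ℕ) : ℝ) / (((n - 2 * z + 1) / 2 : ℕ) : ℝ) ∧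
    (Even n →
      ((n / 2 : ℕ) : ℝ) / (((n - 2 * z + 1) / 2 : ℕ) : ℝ) = (n : ℝ) / ((n : ℝ) - 2 * z)) ∧
    (Odd n →
      ((n / 2 : ℕ) : ℝ) / (((n - 2 * z + 1) / 2 : ℕ) : ℝ) =
        ((n : ℝ) - 1) / ((n : ℝ) - 2 * z + 1)) := by
  set m := (n - 2 * z + 1) / 2
  set k := n / 2
  have hx3 : ∀ i, x i = 0 ∨ x i = 1/2 ∨ x i = 1 := fun i => by
    rw [hx i]; split_ifs <;> simp
  have block {v : ℝ} {l u : ℕ} (hu : u ≤ n) (hv : ∀ i : Fin n, x i = v ↔ l ≤ i.val ∧ i.val < u) :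
      #{i | x i = v} = u - l := by
    simpa only [hv] using Fin.card_filter_le_val_lt hu
  have h0 : #{i | x i = 0} = z := (block (l := 0) (by omega) fun i => by
    rw [hx i]; split_ifs <;> norm_num <;> omega).trans (Nat.sub_zero z)
  have hh : #{i | x i = 1/2} = m := (block (l := z) (u := z + m) (by omega) fun i => by
    rw [hx i]; split_ifs <;> norm_num <;> omega).trans (Nat.add_sub_cancel_left ..)
  have h1 : #{i | x i = 1} = k := (block (l := z + m) le_rfl fun i => by
    rw [hx i]; split_ifs <;> norm_num <;> omega).trans (by omega)
  refine ⟨?_, fun he => floor_half_div_ceil_half_of_even he (by omega),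
    fun ho => floor_half_div_ceil_half_of_odd ho (by omega)⟩
  rw [OPTsc_half_eq hx3 h0 hh h1, OPTscStar_eq hx3 h0 hh h1 (by omega) (by omega),
    div_div_div_cancel_right₀ two_ne_zero]

theorem stmt_13 (n z : ℕ) (hn : 3 ≤ n) (hz1 : 1 ≤ z) (hz2 : z ≤ (n - 1) / 2)
    (x : Fin n → ℝ)
    (hx : ∀ i : Fin n, x i =
      if i.val < z then 0 else if i.val < z + (n - 2 * z + 1) / 2 then 1/2 else 1) :
    OPTsc n z x (1/2) / OPTscStar n z x = ((n / 2 : ℕ) : ℝ) / (((n - 2 * z + 1) / 2 : ℕ) : ℝ) ∧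
    (Even n →
      ((n / 2 : ℕ) : ℝ) / (((n - 2 * z + 1) / 2 : ℕ) : ℝ) = (n : ℝ) / ((n : ℝ) - 2 * z)) ∧
    (Odd n →
      ((n / 2 : ℕ) : ℝ) / (((n - 2 * z + 1) / 2 : ℕ) : ℝ) =
        ((n : ℝ) - 1) / ((n : ℝ) - 2 * z + 1)) :=
  stmt_13_general n z hz1 hz2 x hx
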